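/- (Time compatibility test.) Let ε ≥ 0, let c ∈ ℝ^K, and for two time indices l and m let R_l, R_m ∈ SO(3), p_l, p_m ∈ ℝ³. Suppose the four inlier measurements of keypoints i and j at times l and m satisfy y_t^i = R_t(B_i c) + p_t + ε_t^i and y_t^j = R_t(B_j c) + p_t + ε_t^j for t ∈ {l, m}, with ‖ε_l^i‖, ‖ε_l^j‖, ‖ε_m^i‖, ‖ε_m^j‖ all at most ε. Then | ‖y_l^i − y_l^j‖ − ‖y_m^i − y_m^j‖ | ≤ 4ε. -/

import Mathlib

/-!
Both measured distances are perturbations of the distance `‖R_t (B_i c - B_j c)‖`, which does not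
depend on the time `t` because rotations are isometries; the triangle inequality moves each of them
by at most `‖ε^i‖ + ‖ε^j‖ ≤ 2ε`.
-/

open Matrix

/-- SO(3): real 3×3 matrices with `RᵀR = I` and `det R = 1`. -/
def SO3 : Set (Matrix (Fin 3) (Fin 3) ℝ) := {R | Rᵀ * R = 1 ∧ R.det = 1}

/-- Euclidean norm of a vector in `ℝ³`. -/
noncomputable def enorm3 (v : Fin 3 → ℝ) : ℝ := ‖(WithLp.equiv 2 (Fin 3 → ℝ)).symm v‖

theorem abs_norm_add_sub_norm_add_le_of_norm_eq {E : Type*} [SeminormedAddCommGroup E]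
    {a b : E} (hab : ‖a‖ = ‖b‖) (e f : E) : |‖a + e‖ - ‖b + f‖| ≤ ‖e‖ + ‖f‖ := by
  have ha : |‖a + e‖ - ‖a‖| ≤ ‖e‖ := by simpa using abs_norm_sub_norm_le (a + e) a
  have hb : |‖b‖ - ‖b + f‖| ≤ ‖f‖ := by simpa using abs_norm_sub_norm_le b (b + f)
  calc |‖a + e‖ - ‖b + f‖| ≤ |‖a + e‖ - ‖a‖| + |‖b‖ - ‖b + f‖| := hab ▸ abs_sub_le _ _ _
    _ ≤ ‖e‖ + ‖f‖ := add_le_add ha hb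

theorem EuclideanSpace.norm_toLp_mulVec_of_transpose_mul_self {n : Type*} [Fintype n]
    [DecidableEq n] {R : Matrix n n ℝ} (hR : Rᵀ * R = 1) (v : n → ℝ) :
    ‖WithLp.toLp 2 (R *ᵥ v)‖ = ‖WithLp.toLp 2 v‖ := by
  rw [← sq_eq_sq₀ (norm_nonneg _) (norm_nonneg _), ← real_inner_self_eq_norm_sq,
    ← real_inner_self_eq_norm_sq]
  simp only [EuclideanSpace.inner_eq_star_dotProduct, star_trivial]
  rw [dotProduct_mulVec, ← mulVec_transpose, mulVec_mulVec, hR, one_mulVec]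

theorem enorm3_mulVec_of_mem_SO3 {R : Matrix (Fin 3) (Fin 3) ℝ} (hR : R ∈ SO3) (v : Fin 3 → ℝ) :
    enorm3 (R *ᵥ v) = enorm3 v :=
  EuclideanSpace.norm_toLp_mulVec_of_transpose_mul_self hR.1 v

theorem enorm3_sub_le (u v : Fin 3 → ℝ) : enorm3 (u - v) ≤ enorm3 u + enorm3 v :=
  norm_sub_le (WithLp.toLp 2 u) (WithLp.toLp 2 v)

theorem stmt_10_general (K : ℕ) (eps : ℝ)
    (c : Fin K → ℝ)
    (Rl Rm : Matrix (Fin 3) (Fin 3) ℝ) (hRl : Rl ∈ SO3) (hRm : Rm ∈ SO3)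
    (pl pm : Fin 3 → ℝ)
    (Bi Bj : Matrix (Fin 3) (Fin K) ℝ)
    (yli ylj ymi ymj εli εlj εmi εmj : Fin 3 → ℝ)
    (hyli : yli = Rl.mulVec (Bi.mulVec c) + pl + εli)
    (hylj : ylj = Rl.mulVec (Bj.mulVec c) + pl + εlj)
    (hymi : ymi = Rm.mulVec (Bi.mulVec c) + pm + εmi)
    (hymj : ymj = Rm.mulVec (Bj.mulVec c) + pm + εmj)
    (hεli : enorm3 εli ≤ eps) (hεlj : enorm3 εlj ≤ eps)
    (hεmi : enorm3 εmi ≤ eps) (hεmj : enorm3 εmj ≤ eps) :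
    |enorm3 (yli - ylj) - enorm3 (ymi - ymj)| ≤ 4 * eps := by
  set d := Bi *ᵥ c - Bj *ᵥ c
  have hl : yli - ylj = Rl *ᵥ d + (εli - εlj) := by
    rw [hyli, hylj, mulVec_sub]; abel
  have hm : ymi - ymj = Rm *ᵥ d + (εmi - εmj) := by
    rw [hymi, hymj, mulVec_sub]; abel
  have hrigid : enorm3 (Rl *ᵥ d) = enorm3 (Rm *ᵥ d) := by
    rw [enorm3_mulVec_of_mem_SO3 hRl, enorm3_mulVec_of_mem_SO3 hRm]
  calc |enorm3 (yli - ylj) - enorm3 (ymi - ymj)| ≤ enorm3 (εli - εlj) + enorm3 (εmi - εmj) := by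
        rw [hl, hm]
        exact abs_norm_add_sub_norm_add_le_of_norm_eq (a := WithLp.toLp 2 (Rl *ᵥ d))
          (b := WithLp.toLp 2 (Rm *ᵥ d)) hrigid _ _
    _ ≤ (eps + eps) + (eps + eps) := by
        gcongr
        · exact (enorm3_sub_le _ _).trans (add_le_add hεli hεlj)
        · exact (enorm3_sub_le _ _).trans (add_le_add hεmi hεmj)
    _ = 4 * eps := by ring

/-- Time compatibility test: for inlier measurements of keypoints
`i, j` at times `l, m` with the same rigid shape coefficient `c` and noises bounded
by `ε`, one has `| ‖y_l^i − y_l^j‖ − ‖y_m^i − y_m^j‖ | ≤ 4ε`. -/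
theorem stmt_10 (K : ℕ) (eps : ℝ) (heps : 0 ≤ eps)
    (c : Fin K → ℝ)
    (Rl Rm : Matrix (Fin 3) (Fin 3) ℝ) (hRl : Rl ∈ SO3) (hRm : Rm ∈ SO3)
    (pl pm : Fin 3 → ℝ)
    (Bi Bj : Matrix (Fin 3) (Fin K) ℝ)
    (yli ylj ymi ymj εli εlj εmi εmj : Fin 3 → ℝ)
    (hyli : yli = Rl.mulVec (Bi.mulVec c) + pl + εli)
    (hylj : ylj = Rl.mulVec (Bj.mulVec c) + pl + εlj)
    (hymi : ymi = Rm.mulVec (Bi.mulVec c) + pm + εmi)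
    (hymj : ymj = Rm.mulVec (Bj.mulVec c) + pm + εmj)
    (hεli : enorm3 εli ≤ eps) (hεlj : enorm3 εlj ≤ eps)
    (hεmi : enorm3 εmi ≤ eps) (hεmj : enorm3 εmj ≤ eps) :
    |enorm3 (yli - ylj) - enorm3 (ymi - ymj)| ≤ 4 * eps :=
  stmt_10_general K eps c Rl Rm hRl hRm pl pm Bi Bj yli ylj ymi ymj εli εlj εmi εmj hyli hylj hymi
    hymj hεli hεlj hεmi hεmj
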